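/- The conditional probability that W observes w = ok given that W̄ announced w̄ = ok̄ equals 1/2: with v_ok̄ok = T(ok̄, ok) and ok̄ = (1/√2)(f₀ − f₁), ok = (1/√2)(f₁ − f₀), one has ‖⟪v_ok̄ok, Ψ₂⟫‖² / (‖⟪T(ok̄, f₀), Ψ₂⟫‖² + ‖⟪T(ok̄, f₁), Ψ₂⟫‖²) = 1/2. In particular this conditional probability is nonzero, so no contradiction arises between W's knowledge of w̄ = ok̄ and his observing w = ok. -/

import Mathlib

noncomputable def Psi2 : EuclideanSpace ℂ (Fin 2 × Fin 2) :=
  ((1 / Real.sqrt 3 : ℝ) : ℂ) •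
    (EuclideanSpace.single (0, 1) 1 + EuclideanSpace.single (1, 0) 1 +
      EuclideanSpace.single (1, 1) 1)

/-- Coordinatewise tensor product of two qubit vectors. -/
noncomputable def T (w u : EuclideanSpace ℂ (Fin 2)) :
    EuclideanSpace ℂ (Fin 2 × Fin 2) :=
  (WithLp.equiv 2 (Fin 2 × Fin 2 → ℂ)).symm fun p => w p.1 * u p.2

noncomputable def okbar : EuclideanSpace ℂ (Fin 2) :=
  ((1 / Real.sqrt 2 : ℝ) : ℂ) •
    (EuclideanSpace.single 0 1 - EuclideanSpace.single 1 1)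

noncomputable def okVec : EuclideanSpace ℂ (Fin 2) :=
  ((1 / Real.sqrt 2 : ℝ) : ℂ) •
    (EuclideanSpace.single 1 1 - EuclideanSpace.single 0 1)

/-!
Since Ψ₂ has no e₍₀,₀₎ component, the amplitudes of ok̄ ⊗ u against Ψ₂ cancel in the
|z=−1/2⟩ coordinate of u, leaving ⟪T(ok̄, u), Ψ₂⟫ = −ū₀/√6. The conditional probability is
therefore |ok₀|² / (|1|² + |0|²) = 1/2.
-/

open ComplexConjugate

theorem T_apply (w u : EuclideanSpace ℂ (Fin 2)) (p : Fin 2 × Fin 2) :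
    T w u p = w p.1 * u p.2 := rfl

theorem inner_T (w u : EuclideanSpace ℂ (Fin 2)) (ψ : EuclideanSpace ℂ (Fin 2 × Fin 2)) :
    inner ℂ (T w u) ψ = ∑ i, ∑ j, conj (w i) * conj (u j) * ψ (i, j) := by
  simp [PiLp.inner_apply, Fintype.sum_prod_type, T_apply, mul_comm]

theorem Psi2_apply (p : Fin 2 × Fin 2) :
    Psi2 p = if p = (0, 0) then 0 else ((1 / Real.sqrt 3 : ℝ) : ℂ) := by
  fin_cases p <;> simp [Psi2]

theorem okbar_apply (i : Fin 2) :
    okbar i = if i = 0 then ((1 / Real.sqrt 2 : ℝ) : ℂ) else -((1 / Real.sqrt 2 : ℝ) : ℂ) := by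
  fin_cases i <;> simp [okbar]

theorem inner_T_okbar_Psi2 (u : EuclideanSpace ℂ (Fin 2)) :
    inner ℂ (T okbar u) Psi2 = -((1 / Real.sqrt 6 : ℝ) : ℂ) * conj (u 0) := by
  have h6 : Real.sqrt 6 = Real.sqrt 2 * Real.sqrt 3 := by
    rw [← Real.sqrt_mul (by norm_num)]; norm_num
  simp [inner_T, Fin.sum_univ_two, Psi2_apply, okbar_apply, h6]
  ring

theorem norm_inner_T_okbar_Psi2_sq (u : EuclideanSpace ℂ (Fin 2)) :
    ‖(inner ℂ (T okbar u) Psi2 : ℂ)‖ ^ 2 = ‖u 0‖ ^ 2 / 6 := by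
  rw [inner_T_okbar_Psi2, norm_mul, norm_neg, Complex.norm_conj, mul_pow, Complex.norm_real,
    Real.norm_eq_abs, sq_abs, div_pow, Real.sq_sqrt (by norm_num)]
  ring

theorem norm_okVec_zero_sq : ‖okVec 0‖ ^ 2 = 1 / 2 := by
  simp [okVec]

theorem conditional_prob_ok_given_okbar :
    ‖(inner ℂ (T okbar okVec) Psi2 : ℂ)‖ ^ 2 /
      (‖(inner ℂ (T okbar (EuclideanSpace.single 0 1)) Psi2 : ℂ)‖ ^ 2 +
        ‖(inner ℂ (T okbar (EuclideanSpace.single 1 1)) Psi2 : ℂ)‖ ^ 2) = 1 / 2 := by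
  simp only [norm_inner_T_okbar_Psi2_sq, norm_okVec_zero_sq, PiLp.single_apply]
  norm_num
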